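/- arXiv:0708.1507 — 3 statements merged into one kernel-verified Lean document; each statement's English description precedes it below -/
import Mathlib

section
/- Let 𝐧 ∈ ℝ³ satisfy η_{ab}n^an^b = −Λ. With J_a = ½e_a and S_a = (θ/2)e_a + ½ε_{abc}n^b e^c in ℍ(R_Λ), the brackets are [J_a,J_b] = ε_{abc}J^c, [J_a,S_b] = ε_{abc}S^c + n_b J_a − η_{ab}(n^c J_c), and [S_a,S_b] = n_a S_b − n_b S_a. In particular span{S_0,S_1,S_2} is a Lie subalgebra of 𝔥_Λ. -/
/-- The totally antisymmetric symbol on `Fin 3` with `ε 0 1 2 = 1`. -/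
noncomputable def eps (a b c : Fin 3) : ℝ :=
  ((b.val : ℝ) - (a.val : ℝ)) * ((c.val : ℝ) - (b.val : ℝ)) *
    ((c.val : ℝ) - (a.val : ℝ)) / 2

/-- Multiplication on the ring `R_Λ = ℝ²`: `(a,b)·(c,d) = (ac + Λbd, ad + bc)`. -/
noncomputable def rmul (Λ : ℝ) (x y : ℝ × ℝ) : ℝ × ℝ :=
  (x.1 * y.1 + Λ * x.2 * y.2, x.1 * y.2 + x.2 * y.1)

/-- Conjugation on `R_Λ`: `(a + θb)* = a − θb`. -/
noncomputable def rconj (x : ℝ × ℝ) : ℝ × ℝ := (x.1, -x.2)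

/-- Quaternions over `R_Λ`: an `R_Λ`-scalar part and an `R_Λ`-vector part. -/
abbrev HQ : Type := (ℝ × ℝ) × (Fin 3 → ℝ × ℝ)

/-- Multiplication on `ℍ(R_Λ)` determined by `e_a e_b = −η_{ab}·1 + ε_{abc} e^c`,
extended `R_Λ`-bilinearly. -/
noncomputable def qmul (Λ : ℝ) (η : Fin 3 → ℝ) (x y : HQ) : HQ :=
  (rmul Λ x.1 y.1 - ∑ a, η a • rmul Λ (x.2 a) (y.2 a),
   fun c => rmul Λ x.1 (y.2 c) + rmul Λ y.1 (x.2 c) +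
     ∑ a, ∑ b, (eps a b c * η c) • rmul Λ (x.2 a) (y.2 b))

/-- The identity quaternion. -/
noncomputable def qone : HQ := ((1, 0), fun _ => (0, 0))

/-- Quaternionic conjugation: negation of the vector part. -/
noncomputable def qbar (x : HQ) : HQ := (x.1, fun a => -x.2 a)

/-- The `R_Λ`-conjugation `θ ↦ −θ` extended to `ℍ(R_Λ)`. -/
noncomputable def qstar (x : HQ) : HQ := (rconj x.1, fun a => rconj (x.2 a))

/-- The combined involution `g° = (ḡ)*`. -/
noncomputable def qcirc (x : HQ) : HQ := qstar (qbar x)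

/-- Unit quaternions over `R_Λ`: `g ḡ = 1`. -/
def isUnitQ (Λ : ℝ) (η : Fin 3 → ℝ) (x : HQ) : Prop := qmul Λ η x (qbar x) = qone

/-- The generators `J_a = ½ e_a` of `𝔥 ⊂ ℍ(R_Λ)`. -/
noncomputable def Jq (a : Fin 3) : HQ :=
  ((0, 0), fun b => (if b = a then (1 : ℝ) / 2 else 0, 0))

/-- The generators `S_a = (θ/2)e_a + ½ ε_{abc} n^b e^c` of `𝔞𝔫(2)_𝐧 ⊂ ℍ(R_Λ)`. -/
noncomputable def Sq (η : Fin 3 → ℝ) (n : Fin 3 → ℝ) (a : Fin 3) : HQ :=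
  ((0, 0), fun c => (η c * (∑ b, eps a b c * n b) / 2,
                     if c = a then (1 : ℝ) / 2 else 0))

/-- Commutator bracket on `ℍ(R_Λ)`. -/
noncomputable def brk (Λ : ℝ) (η : Fin 3 → ℝ) (x y : HQ) : HQ :=
  qmul Λ η x y - qmul Λ η y x

set_option maxHeartbeats 8000000 in
/-- With `𝐧² = −Λ`, the elements `J_a = ½e_a` and `S_a = (θ/2)e_a + ½ε_{abc}n^b e^c`
satisfy `[J_a,J_b] = ε_{abc}J^c`, `[J_a,S_b] = ε_{abc}S^c + n_b J_a − η_{ab}(n^cJ_c)`,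
and `[S_a,S_b] = n_a S_b − n_b S_a`; in particular `span{S_a}` is a Lie subalgebra. -/
theorem stmt13 (Λ : ℝ) (η : Fin 3 → ℝ)
    (hη : η 0 = 1 ∧ ((η 1 = 1 ∧ η 2 = 1) ∨ (η 1 = -1 ∧ η 2 = -1)))
    (n : Fin 3 → ℝ) (hn : ∑ a, η a * n a * n a = -Λ) :
    (∀ a b, brk Λ η (Jq a) (Jq b) = ∑ c, (eps a b c * η c) • Jq c) ∧
    (∀ a b, brk Λ η (Jq a) (Sq η n b) =
      (∑ c, (eps a b c * η c) • Sq η n c) + (η b * n b) • Jq a -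
        (if a = b then η a else 0) • ∑ c, n c • Jq c) ∧
    (∀ a b, brk Λ η (Sq η n a) (Sq η n b) =
      (η a * n a) • Sq η n b - (η b * n b) • Sq η n a) ∧
    (∀ a b, brk Λ η (Sq η n a) (Sq η n b) ∈
      Submodule.span ℝ (Set.range (Sq η n))) := by
  have hΛ : Λ = -(η 0 * n 0 * n 0 + η 1 * n 1 * n 1 + η 2 * n 2 * n 2) := by
    rw [Fin.sum_univ_three] at hn; linarith
  subst hΛ
  obtain ⟨h0, h1, h2⟩|⟨h0, h1, h2⟩ := and_or_left.mp hη
  all_goals {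
    have hJJ : ∀ a b, brk (-(η 0 * n 0 * n 0 + η 1 * n 1 * n 1 + η 2 * n 2 * n 2)) η
        (Jq a) (Jq b) = ∑ c, (eps a b c * η c) • Jq c := by
      intro a b
      fin_cases a <;> fin_cases b <;>
        simp [brk, qmul, Jq, eps, rmul, Fin.sum_univ_three, Prod.ext_iff, funext_iff,
          Fin.forall_fin_succ, h0, h1, h2] <;> norm_num <;> and_intros <;>
        (first | ring1 | trivial)
    have hJS : ∀ a b, brk (-(η 0 * n 0 * n 0 + η 1 * n 1 * n 1 + η 2 * n 2 * n 2)) η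
        (Jq a) (Sq η n b) =
        (∑ c, (eps a b c * η c) • Sq η n c) + (η b * n b) • Jq a -
          (if a = b then η a else 0) • ∑ c, n c • Jq c := by
      intro a b
      fin_cases a <;> fin_cases b <;>
        simp [brk, qmul, Jq, Sq, eps, rmul, Fin.sum_univ_three, Prod.ext_iff, funext_iff,
          Fin.forall_fin_succ, h0, h1, h2] <;> norm_num <;> and_intros <;>
        (first | ring1 | trivial)
    have hSS : ∀ a b, brk (-(η 0 * n 0 * n 0 + η 1 * n 1 * n 1 + η 2 * n 2 * n 2)) η
        (Sq η n a) (Sq η n b) = (η a * n a) • Sq η n b - (η b * n b) • Sq η n a := by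
      intro a b
      fin_cases a <;> fin_cases b <;>
        simp [brk, qmul, Sq, eps, rmul, Fin.sum_univ_three, Prod.ext_iff, funext_iff,
          Fin.forall_fin_succ, h0, h1, h2] <;> norm_num <;> and_intros <;>
        (first | ring1 | trivial)
    refine ⟨hJJ, hJS, hSS, fun a b => ?_⟩
    rw [hSS a b]
    exact sub_mem
      (Submodule.smul_mem _ _ (Submodule.subset_span ⟨b, rfl⟩))
      (Submodule.smul_mem _ _ (Submodule.subset_span ⟨a, rfl⟩)) }
end

section
/- The bilinear form t on 𝔥_Λ defined by t(J_a,J_b) = 0, t(P_a,P_b) = 0, t(J_a,P_b) = η_{ab} is invariant (t([X,Y],Z) + t(Y,[X,Z]) = 0), nondegenerate, and both subalgebras 𝔥 = span{J_a} and 𝔞𝔫(2)_𝐧 = span{S_a} (with S_a = P_a + ε_{abc}n^b J^c, 𝐧² = −Λ) are isotropic with respect to t. Thus (𝔥_Λ, 𝔥, 𝔞𝔫(2)_𝐧, t) is a Manin triple. -/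
set_option maxHeartbeats 2000000 in
/-- The bilinear form `t` with `t(J_a,J_b) = t(P_a,P_b) = 0`, `t(J_a,P_b) = η_{ab}`
on the Lie algebra `𝔥_Λ` (brackets `[J,J]=εJ`, `[J,P]=εP`, `[P,P]=ΛεJ`) is invariant
and nondegenerate, and both `𝔥 = span{J_a}` and `𝔞𝔫(2)_𝐧 = span{S_a}`, where
`S_a = P_a + ε_{abc}n^bJ^c` and `𝐧² = −Λ`, are isotropic for `t`:
`(𝔥_Λ, 𝔥, 𝔞𝔫(2)_𝐧, t)` is a Manin triple. -/
theorem stmt15 (Λ : ℝ) (η : Fin 3 → ℝ)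
    (hη : η 0 = 1 ∧ ((η 1 = 1 ∧ η 2 = 1) ∨ (η 1 = -1 ∧ η 2 = -1)))
    (L : Type*) [LieRing L] [LieAlgebra ℝ L]
    (J P : Fin 3 → L) (n : Fin 3 → ℝ)
    (hn : ∑ a, η a * n a * n a = -Λ)
    (hJJ : ∀ a b, ⁅J a, J b⁆ = ∑ c, (eps a b c * η c) • J c)
    (hJP : ∀ a b, ⁅J a, P b⁆ = ∑ c, (eps a b c * η c) • P c)
    (hPP : ∀ a b, ⁅P a, P b⁆ = ∑ c, (Λ * (eps a b c * η c)) • J c)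
    (hspan : Submodule.span ℝ (Set.range J ∪ Set.range P) = ⊤)
    (t : L →ₗ[ℝ] L →ₗ[ℝ] ℝ)
    (hsymm : ∀ x y, t x y = t y x)
    (hJJt : ∀ a b, t (J a) (J b) = 0)
    (hPPt : ∀ a b, t (P a) (P b) = 0)
    (hJPt : ∀ a b, t (J a) (P b) = if a = b then η a else 0) :
    (∀ x y z : L, t ⁅x, y⁆ z + t y ⁅x, z⁆ = 0) ∧
    (∀ x : L, (∀ y, t x y = 0) → x = 0) ∧
    (∀ a b, t (P a + ∑ c, (η c * ∑ d, eps a d c * n d) • J c)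
              (P b + ∑ c, (η c * ∑ d, eps b d c * n d) • J c) = 0) := by
  obtain ⟨h0, h12⟩ := hη
  have hmk2 : η ⟨2, by norm_num⟩ = η 2 := rfl
  have hmk1 : η ⟨1, by norm_num⟩ = η 1 := rfl
  have hmk0 : η ⟨0, by norm_num⟩ = η 0 := rfl
  have hne : ∀ c : Fin 3, η c ≠ 0 := by
    intro c; fin_cases c <;> rcases h12 with ⟨h1, h2⟩ | ⟨h1, h2⟩ <;>
      simp [h0, h1, h2]
  have hPJt : ∀ a b, t (P a) (J b) = if a = b then η a else 0 := by
    intro a b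
    rw [hsymm, hJPt]
    rcases eq_or_ne a b with h | h
    · subst h; simp
    · simp [h, Ne.symm h]
  have hPJ : ∀ a b, ⁅P a, J b⁆ = ∑ c, (-(eps b a c * η c)) • P c := by
    intro a b
    rw [← lie_skew, hJP]
    simp [neg_smul]
  refine ⟨?_, ?_, ?_⟩
  · -- invariance
    obtain ⟨T, hTapp⟩ : ∃ T : L →ₗ[ℝ] L →ₗ[ℝ] (L →ₗ[ℝ] ℝ),
        ∀ x y z, T x y z = t ⁅x, y⁆ z + t y ⁅x, z⁆ := by
      refine ⟨LinearMap.mk₂ ℝ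
        (fun x y => t ⁅x, y⁆ + (t y).comp (LieAlgebra.ad ℝ L x))
        ?_ ?_ ?_ ?_, ?_⟩
      · intro m₁ m₂ nn; ext z; simp [add_lie]; all_goals ring
      · intro c m nn; ext z; simp [smul_lie]; all_goals ring
      · intro m n₁ n₂; ext z; simp [lie_add]; all_goals ring
      · intro c m nn; ext z; simp [lie_smul]; all_goals ring
      · intro x y z; simp
    have hT0 : T = 0 := by
      apply LinearMap.ext_on hspan
      intro x hx
      apply LinearMap.ext_on hspan
      intro y hy
      apply LinearMap.ext_on hspan
      intro z hz
      rcases hx with ⟨a, rfl⟩ | ⟨a, rfl⟩ <;>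
        rcases hy with ⟨b, rfl⟩ | ⟨b, rfl⟩ <;>
        rcases hz with ⟨c, rfl⟩ | ⟨c, rfl⟩ <;>
        simp only [hTapp, LinearMap.zero_apply, hJJ, hJP, hPP, hPJ,
          Fin.sum_univ_three, map_add, map_smul, LinearMap.add_apply,
          LinearMap.smul_apply, hJJt, hPPt, hJPt, hPJt, smul_eq_mul] <;>
        fin_cases a <;> fin_cases b <;> fin_cases c <;>
        rcases h12 with ⟨h1, h2⟩ | ⟨h1, h2⟩ <;>
        norm_num [eps, hmk0, hmk1, hmk2, h0, h1, h2, Fin.ext_iff]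
    intro x y z
    have h := hTapp x y z
    rw [hT0] at h
    simpa using h.symm
  · -- nondegeneracy
    intro x hx
    have hsp : Submodule.span ℝ (Set.range (Sum.elim J P)) = ⊤ := by
      rw [Set.Sum.elim_range]; exact hspan
    have hmem : x ∈ Submodule.span ℝ (Set.range (Sum.elim J P)) := by
      rw [hsp]; trivial
    obtain ⟨c, hc⟩ := (Submodule.mem_span_range_iff_exists_fun ℝ).mp hmem
    have hJc : ∀ b, c (Sum.inl b) = 0 := by
      intro b
      have h := hx (P b)
      rw [← hc] at h
      simp only [map_add, map_sum, LinearMap.add_apply, LinearMap.sum_apply,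
        map_smul, LinearMap.smul_apply,
        Fintype.sum_sum_type, Sum.elim_inl, Sum.elim_inr, hJPt, hPPt,
        smul_eq_mul, mul_ite, mul_zero, Finset.sum_const_zero, add_zero,
        Finset.sum_ite_eq', Finset.mem_univ, if_true] at h
      exact (mul_eq_zero.mp h).resolve_right (hne b)
    have hPc : ∀ b, c (Sum.inr b) = 0 := by
      intro b
      have h := hx (J b)
      rw [← hc] at h
      simp only [map_add, map_sum, LinearMap.add_apply, LinearMap.sum_apply,
        map_smul, LinearMap.smul_apply,
        Fintype.sum_sum_type, Sum.elim_inl, Sum.elim_inr, hJJt, hPJt,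
        smul_eq_mul, mul_ite, mul_zero, Finset.sum_const_zero, zero_add,
        Finset.sum_ite_eq', Finset.mem_univ, if_true] at h
      exact (mul_eq_zero.mp h).resolve_right (hne b)
    rw [← hc]
    apply Finset.sum_eq_zero
    intro i _
    rcases i with a | a
    · rw [hJc a, zero_smul]
    · rw [hPc a, zero_smul]
  · -- isotropy of 𝔞𝔫(2)_𝐧
    intro a b
    simp only [map_add, map_sum, map_smul, LinearMap.add_apply,
      LinearMap.sum_apply, LinearMap.smul_apply, hJJt, hPPt, hJPt, hPJt,
      Fin.sum_univ_three, smul_eq_mul]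
    fin_cases a <;> fin_cases b <;>
      rcases h12 with ⟨h1, h2⟩ | ⟨h1, h2⟩ <;>
      norm_num [eps, hmk0, hmk1, hmk2, h0, h1, h2, Fin.ext_iff]
end

section
/- For t = √(1+(𝐪·𝐧)²/4) + (θ/2)𝐪·𝐞 + ½(𝐪∧𝐧)·𝐞 ∈ ℍ(R_Λ) with 𝐧² = −Λ, one has t° t = w₃ + θ𝐰·𝐞 with w₃ = 1 − (Λ/2)𝐪² and 𝐰 = √(1+(𝐪·𝐧)²/4) 𝐪 + ½ 𝐪∧(𝐪∧𝐧); moreover w₃ + 𝐰·𝐧 = (√(1+(𝐪·𝐧)²/4) + ½𝐪·𝐧)². -/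
/-- The metric inner product `𝐱·𝐲 = η_{ab} x^a y^b`. -/
noncomputable def ip (η : Fin 3 → ℝ) (x y : Fin 3 → ℝ) : ℝ := ∑ a, η a * x a * y a

/-- The `η`-cross product `(𝐱 ∧ 𝐲)^c = ε^c_{ab} x^a y^b`. -/
noncomputable def crossP (η : Fin 3 → ℝ) (x y : Fin 3 → ℝ) : Fin 3 → ℝ :=
  fun c => η c * ∑ a, ∑ b, eps c a b * x a * y b

set_option maxHeartbeats 1000000 in
/-- For `t = √(1+(𝐪·𝐧)²/4) + (θ/2)𝐪·𝐞 + ½(𝐪∧𝐧)·𝐞` with `𝐧² = −Λ`, one has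
`t° t = w₃ + θ𝐰·𝐞` with `w₃ = 1 − (Λ/2)𝐪²`, `𝐰 = √(1+(𝐪·𝐧)²/4)𝐪 + ½𝐪∧(𝐪∧𝐧)`, and
`w₃ + 𝐰·𝐧 = (√(1+(𝐪·𝐧)²/4) + ½𝐪·𝐧)²`. -/
theorem stmt17 (Λ : ℝ) (η : Fin 3 → ℝ)
    (hη : η 0 = 1 ∧ ((η 1 = 1 ∧ η 2 = 1) ∨ (η 1 = -1 ∧ η 2 = -1)))
    (n : Fin 3 → ℝ) (hn : ip η n n = -Λ) (q : Fin 3 → ℝ) :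
    let t : HQ := ((Real.sqrt (1 + (ip η q n) ^ 2 / 4), 0),
                   fun c => (crossP η q n c / 2, q c / 2))
    let w3 : ℝ := 1 - Λ / 2 * ip η q q
    let w : Fin 3 → ℝ := fun c =>
      Real.sqrt (1 + (ip η q n) ^ 2 / 4) * q c + crossP η q (crossP η q n) c / 2
    qmul Λ η (qcirc t) t = ((w3, 0), fun c => (0, w c)) ∧
    w3 + ip η w n = (Real.sqrt (1 + (ip η q n) ^ 2 / 4) + ip η q n / 2) ^ 2 := by
  obtain ⟨h0, h12⟩ := hη
  have hs : Real.sqrt (1 + (ip η q n) ^ 2 / 4) ^ 2 = 1 + (ip η q n) ^ 2 / 4 := by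
    rw [Real.sq_sqrt]; positivity
  have hΛ : Λ = -ip η n n := by rw [hn]; ring
  subst hΛ
  set s := Real.sqrt (1 + (ip η q n) ^ 2 / 4) with hsdef
  simp only [ip, Fin.sum_univ_three] at hs ⊢
  refine ⟨Prod.ext ?_ (funext fun c => ?_), ?_⟩
  · simp only [qmul, qcirc, qstar, qbar, qone, rmul, rconj, crossP, eps,
      Fin.sum_univ_three, Prod.smul_mk, smul_eq_mul, Prod.mk_sub_mk,
      Prod.mk_add_mk, ip]
    norm_num
    rcases h12 with ⟨h1,h2⟩|⟨h1,h2⟩ <;> simp only [h0, h1, h2] at hs ⊢ <;>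
      constructor <;> first | ring1 | linear_combination hs | linear_combination 2 * hs | linear_combination (-1 : ℝ) * hs | nlinarith [hs]
  · fin_cases c <;>
    · simp only [qmul, qcirc, qstar, qbar, qone, rmul, rconj, crossP, eps,
        Fin.sum_univ_three, Prod.smul_mk, smul_eq_mul, Prod.mk_sub_mk,
        Prod.mk_add_mk, ip]
      norm_num
      rcases h12 with ⟨h1,h2⟩|⟨h1,h2⟩ <;> simp only [h0, h1, h2] at hs ⊢ <;>
        constructor <;> first | ring1 | linear_combination hs | linear_combination 2 * hs | linear_combination (-1 : ℝ) * hs | nlinarith [hs]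
  · simp only [crossP, eps, Fin.sum_univ_three]
    norm_num
    rcases h12 with ⟨h1,h2⟩|⟨h1,h2⟩ <;> simp only [h0, h1, h2] at hs ⊢ <;> first | ring1 | linear_combination hs | linear_combination 2 * hs | linear_combination (-1 : ℝ) * hs | nlinarith [hs]
end
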